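/- Let p and q be primes. Define, for nonzero complex u in a punctured neighborhood of 0, F₃(u) = u·(3−p^{−2−2u})·(1−q^{−1−2u})·ζ(1+2u)·ζ(2+2u)³/((1+p^{−2−2u})·ζ(4+4u)) · (4π²p²/q)^{−u} · Γ(1+u)² · e^{u²}. Then F₃ is complex differentiable at every u ≠ 0 in some punctured neighborhood of 0, and as u → 0 through nonzero values, F₃′(u) tends to ((1−q^{−1})(3−p^{−2})/(1+p^{−2}))·(ζ(2)³/(2ζ(4)))·( log(q/(4π²p²)) + 2log p/(p²+1) + 2log p/(3p²−1) + 6ζ′(2)/ζ(2) − 4ζ′(4)/ζ(4) ) + ((3−p^{−2})/(1+p^{−2}))·(log q/q)·ζ(2)³/ζ(4). -/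

import Mathlib

open Complex Filter Topology

/-- The function `F₃` from the evaluation of the main term `Δ₃` in the proof of
Theorem 1.2 at `t = 0`:
`F₃(u) = u·(3−p^{−2−2u})·(1−q^{−1−2u})·ζ(1+2u)·ζ(2+2u)³/((1+p^{−2−2u})·ζ(4+4u)) · (4π²p²/q)^{−u} · Γ(1+u)² · e^{u²}`. -/
noncomputable def F₃ (p q : ℕ) (u : ℂ) : ℂ :=
  u * (3 - (p : ℂ) ^ (-2 - 2 * u)) * (1 - (q : ℂ) ^ (-1 - 2 * u)) *
      riemannZeta (1 + 2 * u) * riemannZeta (2 + 2 * u) ^ 3 /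
      ((1 + (p : ℂ) ^ (-2 - 2 * u)) * riemannZeta (4 + 4 * u)) *
    ((4 * Real.pi ^ 2 * p ^ 2 / q : ℝ) : ℂ) ^ (-u) * Complex.Gamma (1 + u) ^ 2 *
    Complex.exp (u ^ 2)


/-- The regularized factor `u ζ(1+2u)` with its removable singularity filled in. -/
noncomputable def Z₃ (u : ℂ) : ℂ := if u = 0 then 1/2 else u * riemannZeta (1 + 2 * u)

/-- Holomorphic extension of `F₃` through `u = 0`. -/
noncomputable def H₃ (p q : ℕ) (u : ℂ) : ℂ :=
  Z₃ u * ((3 - (p : ℂ) ^ (-2 - 2 * u)) * (1 - (q : ℂ) ^ (-1 - 2 * u)) *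
      riemannZeta (2 + 2 * u) ^ 3 /
      ((1 + (p : ℂ) ^ (-2 - 2 * u)) * riemannZeta (4 + 4 * u))) *
    ((4 * Real.pi ^ 2 * p ^ 2 / q : ℝ) : ℂ) ^ (-u) * Complex.Gamma (1 + u) ^ 2 *
    Complex.exp (u ^ 2)

lemma Z₃_zero : Z₃ 0 = 1/2 := if_pos rfl

lemma H₃_eq_F₃ (p q : ℕ) {u : ℂ} (hu : u ≠ 0) : H₃ p q u = F₃ p q u := by
  unfold H₃ F₃ Z₃
  rw [if_neg hu]
  ring

lemma hasDerivAt_Z₃ : HasDerivAt Z₃ (Real.eulerMascheroniConstant : ℂ) 0 := by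
  rw [hasDerivAt_iff_tendsto_slope]
  have h1 : Tendsto (fun u : ℂ => 1 + 2 * u) (𝓝[≠] 0) (𝓝[≠] 1) := by
    refine tendsto_nhdsWithin_iff.mpr ⟨?_, ?_⟩
    · have : Tendsto (fun u : ℂ => 1 + 2 * u) (𝓝 0) (𝓝 (1 + 2 * 0)) :=
        (continuous_const.add (continuous_const.mul continuous_id)).tendsto 0
      simpa using this.mono_left nhdsWithin_le_nhds
    · filter_upwards [self_mem_nhdsWithin] with u hu
      simp only [Set.mem_compl_iff, Set.mem_singleton_iff]
      intro h
      apply hu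
      have : (2 : ℂ) * u = 0 := by linear_combination h
      simpa using this
  have h2 := tendsto_riemannZeta_sub_one_div.comp h1
  refine h2.congr' ?_
  filter_upwards [self_mem_nhdsWithin] with u hu
  have hu' : u ≠ 0 := hu
  simp only [Function.comp_apply, slope_def_field, Z₃, if_neg hu', if_pos rfl, if_true]
  field_simp
  ring


lemma aux_ne (p : ℕ) (hp : 2 ≤ p) {u : ℂ} (hu : ‖u‖ < 1/4) :
    1 + (p : ℂ) ^ (-2 - 2 * u) ≠ 0 := by
  intro h
  have hre : |u.re| ≤ ‖u‖ := Complex.abs_re_le_norm u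
  have hp1 : (1 : ℝ) < p := by exact_mod_cast hp.trans_lt' one_lt_two
  have h1 : ‖(p : ℂ) ^ (-2 - 2 * u)‖ < 1 := by
    rw [show ((p : ℕ) : ℂ) = (((p : ℝ)) : ℂ) by norm_num,
      Complex.norm_cpow_eq_rpow_re_of_pos (by linarith)]
    apply Real.rpow_lt_one_of_one_lt_of_neg hp1
    have : (-2 - 2 * u).re = -2 - 2 * u.re := by
      simp [Complex.sub_re, Complex.mul_re]
    rw [this]
    cases' abs_le.mp hre with h1 h2
    linarith
  have h2 : (p : ℂ) ^ (-2 - 2 * u) = -1 := by linear_combination h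
  rw [h2] at h1
  simp at h1


set_option maxHeartbeats 1600000 in
lemma key₃ (w Q z2 z4 d2 d4 lp lq LC g : ℂ) (hw : w ≠ 0) (hQ : Q ≠ 0)
    (hz2 : z2 ≠ 0) (hz4 : z4 ≠ 0) (h1 : w + 1 ≠ 0) (h3 : 3 * w - 1 ≠ 0) :
    g * ((3 - w⁻¹) * (1 - Q⁻¹) * z2 ^ 3 / ((1 + w⁻¹) * z4)) +
          1 / 2 *
            ((((-(w⁻¹ * lp * -2) * (1 - Q⁻¹) +
                        (3 - w⁻¹) * -(Q⁻¹ * lq * -2)) *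
                      z2 ^ 3 +
                    (3 - w⁻¹) * (1 - Q⁻¹) * (3 * z2 ^ 2 * (d2 * 2))) *
                  ((1 + w⁻¹) * z4) -
                (3 - w⁻¹) * (1 - Q⁻¹) * z2 ^ 3 *
                  (w⁻¹ * lp * -2 * z4 + (1 + w⁻¹) * (d4 * 4))) /
              ((1 + w⁻¹) * z4) ^ 2) +
        1 / 2 * ((3 - w⁻¹) * (1 - Q⁻¹) * z2 ^ 3 / ((1 + w⁻¹) * z4)) *
          ((LC - lq) * -1) +
      1 / 2 * ((3 - w⁻¹) * (1 - Q⁻¹) * z2 ^ 3 / ((1 + w⁻¹) * z4)) *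
        (2 * -g) =
    (1 - Q⁻¹) * (3 - w⁻¹) / (1 + w⁻¹) * (z2 ^ 3 / (2 * z4)) *
        (lq - LC + 2 * lp / (w + 1) +
              2 * lp / (3 * w - 1) +
            6 * d2 / z2 -
          4 * d4 / z4) +
      (3 - w⁻¹) / (1 + w⁻¹) * (lq / Q) * (z2 ^ 3 / z4) := by
  have hw1 : (1 : ℂ) + w⁻¹ ≠ 0 := by
    have e : (1 : ℂ) + w⁻¹ = (w + 1) / w := by field_simp
    rw [e]
    exact div_ne_zero h1 hw
  have hden : ((1 : ℂ) + w⁻¹) * z4 ≠ 0 := mul_ne_zero hw1 hz4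
  have hS : (3 - w⁻¹) * (1 - Q⁻¹) * z2 ^ 3 / ((1 + w⁻¹) * z4)
      = (3 * w - 1) * (Q - 1) * z2 ^ 3 / (Q * (w + 1) * z4) := by
    rw [div_eq_div_iff hden (by exact mul_ne_zero (mul_ne_zero hQ h1) hz4)]
    field_simp
  have hT2 : (((-(w⁻¹ * lp * -2) * (1 - Q⁻¹) + (3 - w⁻¹) * -(Q⁻¹ * lq * -2)) * z2 ^ 3 +
          (3 - w⁻¹) * (1 - Q⁻¹) * (3 * z2 ^ 2 * (d2 * 2))) * ((1 + w⁻¹) * z4) -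
        (3 - w⁻¹) * (1 - Q⁻¹) * z2 ^ 3 * (w⁻¹ * lp * -2 * z4 + (1 + w⁻¹) * (d4 * 4))) /
        ((1 + w⁻¹) * z4) ^ 2
      = z2 ^ 2 * (((2 * lp * (Q - 1) + 2 * lq * (3 * w - 1)) * z2
            + 6 * (3 * w - 1) * (Q - 1) * d2) * ((w + 1) * z4)
          - (3 * w - 1) * (Q - 1) * z2 * (-(2 * lp * z4) + 4 * (w + 1) * d4)) /
        (Q * (w + 1) ^ 2 * z4 ^ 2) := by
    rw [div_eq_div_iff (by exact pow_ne_zero 2 hden)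
      (by exact mul_ne_zero (mul_ne_zero hQ (pow_ne_zero 2 h1)) (pow_ne_zero 2 hz4))]
    field_simp
    ring
  have hR1 : (1 - Q⁻¹) * (3 - w⁻¹) / (1 + w⁻¹) = (Q - 1) * (3 * w - 1) / (Q * (w + 1)) := by
    rw [div_eq_div_iff hw1 (by exact mul_ne_zero hQ h1)]
    field_simp
  have hR2 : (3 - w⁻¹) / (1 + w⁻¹) = (3 * w - 1) / (w + 1) := by
    rw [div_eq_div_iff hw1 h1]
    field_simp
  rw [hS, hT2, hR1, hR2]
  have hdS : (Q * (w + 1) * z4) ≠ 0 := mul_ne_zero (mul_ne_zero hQ h1) hz4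
  have hd2n : (Q * (w + 1) ^ 2 * z4 ^ 2) ≠ 0 := mul_ne_zero (mul_ne_zero hQ (pow_ne_zero 2 h1)) (pow_ne_zero 2 hz4)
  have hD : (2 * Q * (w + 1) ^ 2 * (3 * w - 1) * z2 * z4 ^ 2) ≠ 0 := by
    apply mul_ne_zero (mul_ne_zero (mul_ne_zero (mul_ne_zero (mul_ne_zero two_ne_zero hQ) (pow_ne_zero 2 h1)) h3) hz2) (pow_ne_zero 2 hz4)
  have hdM : ((w + 1) * (3 * w - 1) * z2 * z4) ≠ 0 :=
    mul_ne_zero (mul_ne_zero (mul_ne_zero h1 h3) hz2) hz4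
  have hL1 : g * ((3 * w - 1) * (Q - 1) * z2 ^ 3 / (Q * (w + 1) * z4))
      = g * ((3 * w - 1) * (Q - 1) * z2 ^ 3) * (2 * (w + 1) * (3 * w - 1) * z2 * z4) / (2 * Q * (w + 1) ^ 2 * (3 * w - 1) * z2 * z4 ^ 2) := by
    rw [← mul_div_assoc, div_eq_div_iff hdS hD]; ring
  have hL2 : 1 / 2 * (z2 ^ 2 * (((2 * lp * (Q - 1) + 2 * lq * (3 * w - 1)) * z2
            + 6 * (3 * w - 1) * (Q - 1) * d2) * ((w + 1) * z4)
          - (3 * w - 1) * (Q - 1) * z2 * (-(2 * lp * z4) + 4 * (w + 1) * d4)) / (Q * (w + 1) ^ 2 * z4 ^ 2))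
      = z2 ^ 2 * (((2 * lp * (Q - 1) + 2 * lq * (3 * w - 1)) * z2
            + 6 * (3 * w - 1) * (Q - 1) * d2) * ((w + 1) * z4)
          - (3 * w - 1) * (Q - 1) * z2 * (-(2 * lp * z4) + 4 * (w + 1) * d4)) * ((3 * w - 1) * z2) / (2 * Q * (w + 1) ^ 2 * (3 * w - 1) * z2 * z4 ^ 2) := by
    rw [← mul_div_assoc, div_eq_div_iff hd2n hD]; ring
  have hL3 : 1 / 2 * ((3 * w - 1) * (Q - 1) * z2 ^ 3 / (Q * (w + 1) * z4)) * ((LC - lq) * -1)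
      = ((3 * w - 1) * (Q - 1) * z2 ^ 3) * (lq - LC) * ((w + 1) * (3 * w - 1) * z2 * z4) / (2 * Q * (w + 1) ^ 2 * (3 * w - 1) * z2 * z4 ^ 2) := by
    rw [← mul_div_assoc, div_mul_eq_mul_div, div_eq_div_iff hdS hD]; ring
  have hL4 : 1 / 2 * ((3 * w - 1) * (Q - 1) * z2 ^ 3 / (Q * (w + 1) * z4)) * (2 * -g)
      = -(g * ((3 * w - 1) * (Q - 1) * z2 ^ 3) * (2 * (w + 1) * (3 * w - 1) * z2 * z4)) / (2 * Q * (w + 1) ^ 2 * (3 * w - 1) * z2 * z4 ^ 2) := by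
    rw [← mul_div_assoc, div_mul_eq_mul_div, div_eq_div_iff hdS hD]; ring
  have hR3 : lq - LC + 2 * lp / (w + 1) + 2 * lp / (3 * w - 1) + 6 * d2 / z2 - 4 * d4 / z4
      = ((lq - LC) * ((w + 1) * (3 * w - 1) * z2 * z4) + 2 * lp * ((3 * w - 1) * z2 * z4) + 2 * lp * ((w + 1) * z2 * z4) + 6 * d2 * ((w + 1) * (3 * w - 1) * z4) - 4 * d4 * ((w + 1) * (3 * w - 1) * z2)) / ((w + 1) * (3 * w - 1) * z2 * z4) := by
    have h3' : w * 3 - 1 ≠ 0 := by rwa [mul_comm]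
    field_simp
  have hR1' : (Q - 1) * (3 * w - 1) / (Q * (w + 1)) * (z2 ^ 3 / (2 * z4)) *
        (((lq - LC) * ((w + 1) * (3 * w - 1) * z2 * z4) + 2 * lp * ((3 * w - 1) * z2 * z4) + 2 * lp * ((w + 1) * z2 * z4) + 6 * d2 * ((w + 1) * (3 * w - 1) * z4) - 4 * d4 * ((w + 1) * (3 * w - 1) * z2)) / ((w + 1) * (3 * w - 1) * z2 * z4))
      = (Q - 1) * (3 * w - 1) * z2 ^ 3 * ((lq - LC) * ((w + 1) * (3 * w - 1) * z2 * z4) + 2 * lp * ((3 * w - 1) * z2 * z4) + 2 * lp * ((w + 1) * z2 * z4) + 6 * d2 * ((w + 1) * (3 * w - 1) * z4) - 4 * d4 * ((w + 1) * (3 * w - 1) * z2)) * ((w + 1) * (3 * w - 1) * z2 * z4) / ((2 * Q * (w + 1) ^ 2 * (3 * w - 1) * z2 * z4 ^ 2) * ((w + 1) * (3 * w - 1) * z2 * z4)) := by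
    rw [div_mul_div_comm, div_mul_div_comm, div_eq_div_iff (by
      exact mul_ne_zero (mul_ne_zero (mul_ne_zero hQ h1) (mul_ne_zero two_ne_zero hz4)) hdM)
      (mul_ne_zero hD hdM)]
    ring
  have hR2' : (3 * w - 1) / (w + 1) * (lq / Q) * (z2 ^ 3 / z4)
      = (3 * w - 1) * lq * z2 ^ 3 * ((w + 1) * (3 * w - 1) * z2 * z4) * (2 * (w + 1) * (3 * w - 1) * z2 * z4) /
        ((2 * Q * (w + 1) ^ 2 * (3 * w - 1) * z2 * z4 ^ 2) * ((w + 1) * (3 * w - 1) * z2 * z4)) := by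
    rw [div_mul_div_comm, div_mul_div_comm, div_eq_div_iff (by
      exact mul_ne_zero (mul_ne_zero h1 hQ) hz4) (mul_ne_zero hD hdM)]
    ring
  have hLD : ∀ X : ℂ, X / (2 * Q * (w + 1) ^ 2 * (3 * w - 1) * z2 * z4 ^ 2) = X * ((w + 1) * (3 * w - 1) * z2 * z4) / ((2 * Q * (w + 1) ^ 2 * (3 * w - 1) * z2 * z4 ^ 2) * ((w + 1) * (3 * w - 1) * z2 * z4)) := by
    intro X
    rw [mul_div_mul_right _ _ hdM]
  rw [hL1, hL2, hL3, hL4, hR3, hR1', hR2', hLD, hLD, hLD, hLD,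
    ← add_div, ← add_div, ← add_div]
  ring
set_option maxHeartbeats 2000000 in
lemma hasDerivAt_H₃ (p q : ℕ) (hp : p.Prime) (hq : q.Prime) :
    HasDerivAt (H₃ p q)
      (((1 - (q : ℂ)⁻¹) * (3 - ((p : ℂ) ^ 2)⁻¹) / (1 + ((p : ℂ) ^ 2)⁻¹)) *
            (riemannZeta 2 ^ 3 / (2 * riemannZeta 4)) *
            ((Real.log (q / (4 * Real.pi ^ 2 * p ^ 2)) : ℂ)
              + 2 * (Real.log p : ℂ) / ((p : ℂ) ^ 2 + 1)
              + 2 * (Real.log p : ℂ) / (3 * (p : ℂ) ^ 2 - 1)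
              + 6 * deriv riemannZeta 2 / riemannZeta 2
              - 4 * deriv riemannZeta 4 / riemannZeta 4)
          + ((3 - ((p : ℂ) ^ 2)⁻¹) / (1 + ((p : ℂ) ^ 2)⁻¹)) *
              ((Real.log q : ℂ) / (q : ℂ)) * (riemannZeta 2 ^ 3 / riemannZeta 4)) 0 := by
  have hp0 : (p : ℂ) ≠ 0 := Nat.cast_ne_zero.mpr hp.pos.ne'
  have hq0 : (q : ℂ) ≠ 0 := Nat.cast_ne_zero.mpr hq.pos.ne'
  have hpR : (2:ℝ) ≤ p := by exact_mod_cast hp.two_le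
  have hqR : (2:ℝ) ≤ q := by exact_mod_cast hq.two_le
  have hc0R : (0:ℝ) < 4 * Real.pi ^ 2 * p ^ 2 / q := by positivity
  have hc0 : ((4 * Real.pi ^ 2 * p ^ 2 / q : ℝ) : ℂ) ≠ 0 := by exact_mod_cast hc0R.ne'
  have hlin2 : HasDerivAt (fun u : ℂ => -2 - 2 * u) (-2) 0 := by
    simpa using ((hasDerivAt_id (0:ℂ)).const_mul (2:ℂ)).const_sub (-2)
  have hlin1 : HasDerivAt (fun u : ℂ => -1 - 2 * u) (-2) 0 := by
    simpa using ((hasDerivAt_id (0:ℂ)).const_mul (2:ℂ)).const_sub (-1)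
  have hl2 : HasDerivAt (fun u : ℂ => 2 + 2 * u) 2 0 := by
    simpa using ((hasDerivAt_id (0:ℂ)).const_mul (2:ℂ)).const_add 2
  have hl4 : HasDerivAt (fun u : ℂ => 4 + 4 * u) 4 0 := by
    simpa using ((hasDerivAt_id (0:ℂ)).const_mul (4:ℂ)).const_add 4
  have hA := (hlin2.const_cpow (c := (p:ℂ)) (Or.inl hp0)).const_sub 3
  have hB := (hlin1.const_cpow (c := (q:ℂ)) (Or.inl hq0)).const_sub 1
  have hC := (hlin2.const_cpow (c := (p:ℂ)) (Or.inl hp0)).const_add 1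
  have hz2' : HasDerivAt riemannZeta (deriv riemannZeta 2) ((fun u : ℂ => 2 + 2 * u) 0) := by
    simpa using (differentiableAt_riemannZeta (by norm_num : (2:ℂ) ≠ 1)).hasDerivAt
  have hz2 : HasDerivAt (fun u : ℂ => riemannZeta (2 + 2 * u)) (deriv riemannZeta 2 * 2) 0 :=
    hz2'.comp 0 hl2
  have hz4' : HasDerivAt riemannZeta (deriv riemannZeta 4) ((fun u : ℂ => 4 + 4 * u) 0) := by
    simpa using (differentiableAt_riemannZeta (by norm_num : (4:ℂ) ≠ 1)).hasDerivAt
  have hz4 : HasDerivAt (fun u : ℂ => riemannZeta (4 + 4 * u)) (deriv riemannZeta 4 * 4) 0 :=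
    hz4'.comp 0 hl4
  have hz40 : riemannZeta (4 + 4 * (0:ℂ)) ≠ 0 := by
    apply riemannZeta_ne_zero_of_one_lt_re
    norm_num
  have hC0 : 1 + (p:ℂ) ^ (-2 - 2 * (0:ℂ)) ≠ 0 := aux_ne p hp.two_le (by norm_num)
  have hden : ((fun u : ℂ => (1 + (p:ℂ) ^ (-2 - 2*u)) * riemannZeta (4 + 4*u)) 0) ≠ 0 :=
    mul_ne_zero hC0 hz40
  have hfrac := ((hA.mul hB).mul (hz2.pow 3)).div (hC.mul hz4) hden
  have hX := (hasDerivAt_neg (0:ℂ)).const_cpow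
    (c := ((4 * Real.pi ^ 2 * p ^ 2 / q : ℝ) : ℂ)) (Or.inl hc0)
  have hΓ' : HasDerivAt Complex.Gamma (-(Real.eulerMascheroniConstant:ℂ))
      ((fun u : ℂ => 1 + u) 0) := by
    simpa using Complex.hasDerivAt_Gamma_one
  have hΓ : HasDerivAt (fun u : ℂ => Complex.Gamma (1 + u))
      (-(Real.eulerMascheroniConstant:ℂ) * 1) 0 :=
    hΓ'.comp 0 (by simpa using (hasDerivAt_id (0:ℂ)).const_add 1)
  have hE : HasDerivAt (fun u : ℂ => Complex.exp (u ^ 2)) 0 0 := by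
    simpa [Function.comp_def] using (Complex.hasDerivAt_exp ((0:ℂ)^2)).comp 0 (hasDerivAt_pow 2 (0:ℂ))
  have hbig := (((hasDerivAt_Z₃.mul hfrac).mul hX).mul (hΓ.pow 2)).mul hE
  refine HasDerivAt.congr_deriv hbig ?_
  have hpa : (p:ℂ) ^ (-2 : ℂ) = ((p:ℂ)^2)⁻¹ := by
    rw [show (-2:ℂ) = ((-2:ℤ):ℂ) by norm_num, Complex.cpow_intCast]
    rw [zpow_neg]
    norm_cast
  have hqb : (q:ℂ) ^ (-1 : ℂ) = (q:ℂ)⁻¹ := Complex.cpow_neg_one _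
  have hz2ne : riemannZeta 2 ≠ 0 := riemannZeta_ne_zero_of_one_lt_re (by norm_num)
  have hz4ne : riemannZeta 4 ≠ 0 := riemannZeta_ne_zero_of_one_lt_re (by norm_num)
  have hP1 : ((p:ℂ)^2 + 1) ≠ 0 := by
    have h : (((p:ℝ)^2 + 1 : ℝ) : ℂ) = (p:ℂ)^2 + 1 := by push_cast; ring
    rw [← h]
    exact_mod_cast (by positivity : (0:ℝ) < (p:ℝ)^2 + 1).ne'
  have hP3 : (3 * (p:ℂ)^2 - 1) ≠ 0 := by
    have h : ((3 * (p:ℝ)^2 - 1 : ℝ) : ℂ) = 3 * (p:ℂ)^2 - 1 := by push_cast; ring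
    rw [← h]
    exact_mod_cast (by nlinarith : (0:ℝ) < 3 * (p:ℝ)^2 - 1).ne'
  have h1p : (1 + ((p:ℂ)^2)⁻¹) ≠ 0 := by
    have h : ((1 + ((p:ℝ)^2)⁻¹ : ℝ) : ℂ) = 1 + ((p:ℂ)^2)⁻¹ := by push_cast; ring
    rw [← h]
    exact_mod_cast (by positivity : (0:ℝ) < 1 + ((p:ℝ)^2)⁻¹).ne'
  have hC0' : 1 + ((p:ℂ)^2)⁻¹ ≠ 0 := h1p
  simp only [mul_zero, sub_zero, add_zero, neg_zero, Complex.cpow_zero, Z₃_zero,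
    hpa, hqb, Complex.Gamma_one, one_pow, pow_one, Complex.exp_zero, mul_one, one_mul,
    zero_mul, zero_add, Pi.mul_apply, Pi.div_apply, Pi.pow_apply]
  rw [← Complex.ofReal_log hc0R.le]
  rw [Real.log_div (by positivity) (by positivity : (0:ℝ) < (q:ℝ)).ne',
      Real.log_div (by positivity : (0:ℝ) < (q:ℝ)).ne' (by positivity)]
  rw [show ((0:ℂ)^2) = 0 from by norm_num, Complex.exp_zero, mul_one,
    show (3-1 : ℕ) = 2 from rfl]
  simp only [← Complex.natCast_log]
  push_cast
  exact key₃ ((p:ℂ)^2) (q:ℂ) (riemannZeta 2) (riemannZeta 4) (deriv riemannZeta 2)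
    (deriv riemannZeta 4) (Complex.log (p:ℂ)) (Complex.log (q:ℂ))
    ((Real.log (4 * Real.pi ^ 2 * (p:ℝ) ^ 2) : ℂ)) ((Real.eulerMascheroniConstant : ℂ))
    (pow_ne_zero 2 hp0) hq0 hz2ne hz4ne hP1 hP3

lemma diffH₃ (p q : ℕ) (hp : p.Prime) (hq : q.Prime) :
    ∀ u ∈ Metric.ball (0:ℂ) (1/4), u ≠ 0 → DifferentiableAt ℂ (H₃ p q) u := by
  intro u hu hu0
  rw [Metric.mem_ball, dist_zero_right] at hu
  have hre : |u.re| ≤ ‖u‖ := Complex.abs_re_le_norm u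
  have hre' : -(1/4) < u.re ∧ u.re < 1/4 := by
    cases' abs_le.mp hre with h1 h2
    constructor <;> linarith
  have hp0 : (p : ℂ) ≠ 0 := Nat.cast_ne_zero.mpr hp.pos.ne'
  have hq0 : (q : ℂ) ≠ 0 := Nat.cast_ne_zero.mpr hq.pos.ne'
  have hc0 : ((4 * Real.pi ^ 2 * p ^ 2 / q : ℝ) : ℂ) ≠ 0 := by
    have h1 : (0:ℝ) < q := by exact_mod_cast hq.pos
    have h2 : (0:ℝ) < p := by exact_mod_cast hp.pos
    have : (0:ℝ) < 4 * Real.pi ^ 2 * p ^ 2 / q := by positivity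
    exact_mod_cast this.ne'
  have hZ : DifferentiableAt ℂ Z₃ u := by
    have hz1 : (1 : ℂ) + 2 * u ≠ 1 := by
      intro h
      apply hu0
      have : (2:ℂ) * u = 0 := by linear_combination h
      simpa using this
    have hf : DifferentiableAt ℂ (fun v : ℂ => v * riemannZeta (1 + 2 * v)) u := by
      apply differentiableAt_id.mul
      exact (differentiableAt_riemannZeta hz1).comp u (by fun_prop)
    refine hf.congr_of_eventuallyEq ?_
    filter_upwards [isOpen_ne.mem_nhds hu0] with v hv
    simp only [Z₃, if_neg hv]
  have hA : DifferentiableAt ℂ (fun v : ℂ => 3 - (p : ℂ) ^ (-2 - 2 * v)) u := by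
    apply (differentiableAt_const _).sub
    exact DifferentiableAt.const_cpow (by fun_prop) (Or.inl hp0)
  have hB : DifferentiableAt ℂ (fun v : ℂ => 1 - (q : ℂ) ^ (-1 - 2 * v)) u := by
    apply (differentiableAt_const _).sub
    exact DifferentiableAt.const_cpow (by fun_prop) (Or.inl hq0)
  have hCd : DifferentiableAt ℂ (fun v : ℂ => 1 + (p : ℂ) ^ (-2 - 2 * v)) u := by
    apply (differentiableAt_const _).add
    exact DifferentiableAt.const_cpow (by fun_prop) (Or.inl hp0)
  have hz2 : DifferentiableAt ℂ (fun v : ℂ => riemannZeta (2 + 2 * v)) u := by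
    have h21 : (2 : ℂ) + 2 * u ≠ 1 := by
      intro h
      have h' := congrArg Complex.re h
      simp only [Complex.add_re, Complex.mul_re] at h'
      norm_num at h'
      linarith [hre'.1]
    exact (differentiableAt_riemannZeta h21).comp u (by fun_prop)
  have hz4 : DifferentiableAt ℂ (fun v : ℂ => riemannZeta (4 + 4 * v)) u := by
    have h41 : (4 : ℂ) + 4 * u ≠ 1 := by
      intro h
      have h' := congrArg Complex.re h
      simp only [Complex.add_re, Complex.mul_re] at h'
      norm_num at h'
      linarith [hre'.1]
    exact (differentiableAt_riemannZeta h41).comp u (by fun_prop)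
  have hz4ne : riemannZeta (4 + 4 * u) ≠ 0 := by
    apply riemannZeta_ne_zero_of_one_lt_re
    have : (4 + 4 * u).re = 4 + 4 * u.re := by
      simp [Complex.add_re, Complex.mul_re]
    rw [this]
    cases' hre' with h1 h2
    linarith
  have hden : (1 + (p : ℂ) ^ (-2 - 2 * u)) * riemannZeta (4 + 4 * u) ≠ 0 :=
    mul_ne_zero (aux_ne p hp.two_le hu) hz4ne
  have hX : DifferentiableAt ℂ
      (fun v : ℂ => ((4 * Real.pi ^ 2 * p ^ 2 / q : ℝ) : ℂ) ^ (-v)) u :=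
    DifferentiableAt.const_cpow (by fun_prop) (Or.inl hc0)
  have hΓ : DifferentiableAt ℂ (fun v : ℂ => Complex.Gamma (1 + v)) u := by
    have h1u : ∀ m : ℕ, 1 + u ≠ -m := by
      intro m h
      have h' := congrArg Complex.re h
      simp only [Complex.add_re, Complex.neg_re, Complex.natCast_re,
        Complex.one_re] at h'
      have hm : (0:ℝ) ≤ (m:ℝ) := Nat.cast_nonneg m
      linarith [hre'.1]
    exact (Complex.differentiableAt_Gamma _ h1u).comp u (by fun_prop)
  have hE : DifferentiableAt ℂ (fun v : ℂ => Complex.exp (v ^ 2)) u := by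
    fun_prop
  exact ((((hZ.mul (((hA.mul hB).mul (hz2.pow 3)).div (hCd.mul hz4) hden)).mul
    hX).mul (hΓ.pow 2)).mul hE)

theorem stmt_11 (p q : ℕ) (hp : p.Prime) (hq : q.Prime) :
    (∀ᶠ u in 𝓝[≠] (0 : ℂ), DifferentiableAt ℂ (F₃ p q) u) ∧
    Tendsto (deriv (F₃ p q)) (𝓝[≠] (0 : ℂ))
      (𝓝 (((1 - (q : ℂ)⁻¹) * (3 - ((p : ℂ) ^ 2)⁻¹) / (1 + ((p : ℂ) ^ 2)⁻¹)) *
            (riemannZeta 2 ^ 3 / (2 * riemannZeta 4)) *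
            ((Real.log (q / (4 * Real.pi ^ 2 * p ^ 2)) : ℂ)
              + 2 * (Real.log p : ℂ) / ((p : ℂ) ^ 2 + 1)
              + 2 * (Real.log p : ℂ) / (3 * (p : ℂ) ^ 2 - 1)
              + 6 * deriv riemannZeta 2 / riemannZeta 2
              - 4 * deriv riemannZeta 4 / riemannZeta 4)
          + ((3 - ((p : ℂ) ^ 2)⁻¹) / (1 + ((p : ℂ) ^ 2)⁻¹)) *
              ((Real.log q : ℂ) / (q : ℂ)) * (riemannZeta 2 ^ 3 / riemannZeta 4))) := by
  have hball : Metric.ball (0:ℂ) (1/4) ∈ 𝓝 (0:ℂ) := Metric.ball_mem_nhds _ (by norm_num)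
  have hEv : ∀ᶠ u in 𝓝[≠] (0:ℂ), u ∈ Metric.ball (0:ℂ) (1/4) ∧ u ≠ 0 := by
    filter_upwards [mem_nhdsWithin_of_mem_nhds hball, self_mem_nhdsWithin] with u h1 h2
    exact ⟨h1, h2⟩
  have heq : ∀ᶠ u in 𝓝[≠] (0:ℂ), F₃ p q =ᶠ[𝓝 u] H₃ p q := by
    filter_upwards [self_mem_nhdsWithin] with u hu
    filter_upwards [isOpen_ne.mem_nhds hu] with v hv
    exact (H₃_eq_F₃ p q hv).symm
  have hdiff0 : DifferentiableAt ℂ (H₃ p q) 0 :=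
    (hasDerivAt_H₃ p q hp hq).differentiableAt
  have hdiffAll : ∀ u ∈ Metric.ball (0:ℂ) (1/4), DifferentiableAt ℂ (H₃ p q) u := by
    intro u hu
    rcases eq_or_ne u 0 with rfl | hu0
    · exact hdiff0
    · exact diffH₃ p q hp hq u hu hu0
  constructor
  · filter_upwards [hEv, heq] with u hu he
    exact (hdiffAll u hu.1).congr_of_eventuallyEq he
  · have hAna : AnalyticOnNhd ℂ (H₃ p q) (Metric.ball 0 (1/4)) :=
      DifferentiableOn.analyticOnNhd
        (fun u hu => (hdiffAll u hu).differentiableWithinAt) Metric.isOpen_ball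
    have hcont : ContinuousAt (deriv (H₃ p q)) 0 :=
      (hAna.deriv 0 (by norm_num [Metric.mem_ball])).continuousAt
    have h1 : Tendsto (deriv (H₃ p q)) (𝓝[≠] 0) (𝓝 (deriv (H₃ p q) 0)) :=
      hcont.tendsto.mono_left nhdsWithin_le_nhds
    rw [(hasDerivAt_H₃ p q hp hq).deriv] at h1
    refine h1.congr' ?_
    filter_upwards [heq] with u he
    exact he.symm.deriv_eq
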